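/- arXiv:1802.02562 — 8 statements merged into one kernel-verified Lean document; each statement's English description precedes it below -/
import Mathlib

section
/- If F and D are both maxmin-fair distributions over the feasible solutions S of a search problem instance (U, S), then F[u] = D[u] for every individual u ∈ U. -/
/-!
A search problem instance consists of a finite type `α` of individuals and a nonempty
collection of feasible solutions, given by a predicate `sol : Finset α → Prop`.
A distribution over the solutions is a function `p : Finset α → ℝ` which is nonnegative,
supported on solutions, and sums to 1.  The satisfaction probability of `u` under `p`
is the total probability of the solutions containing `u`.
-/

variable {α : Type*}

/-- `p` is a probability distribution over the feasible solutions `sol`. -/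
def IsDistrib [Fintype α] (sol : Finset α → Prop) (p : Finset α → ℝ) : Prop :=
  (∀ A, 0 ≤ p A) ∧ (∀ A, p A ≠ 0 → sol A) ∧ (∑ A : Finset α, p A) = 1

/-- The satisfaction probability of individual `u` under the distribution `p`. -/
def sat [Fintype α] [DecidableEq α] (p : Finset α → ℝ) (u : α) : ℝ :=
  ∑ A : Finset α, if u ∈ A then p A else 0

/-- `F` is a maxmin-fair distribution over the feasible solutions `sol`: it is a
distribution, and improving any individual's satisfaction probability requires hurting
some individual who is no better off. -/
def MaxminFair [Fintype α] [DecidableEq α] (sol : Finset α → Prop) (F : Finset α → ℝ) : Prop :=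
  IsDistrib sol F ∧
    ∀ D, IsDistrib sol D → ∀ u, sat F u < sat D u →
      ∃ v, sat D v < sat F v ∧ sat F v ≤ sat F u

private lemma maxmin_aux [Fintype α] [DecidableEq α] {sol : Finset α → Prop}
    {F D : Finset α → ℝ} (hF : MaxminFair sol F) (hD : IsDistrib sol D)
    {u : α} (h : sat F u < sat D u) :
    ∃ v, sat F v ≠ sat D v ∧ min (sat F v) (sat D v) < min (sat F u) (sat D u) := by
  obtain ⟨v, hv1, hv2⟩ := hF.2 D hD u h
  refine ⟨v, hv1.ne', ?_⟩
  have : min (sat F v) (sat D v) ≤ sat D v := min_le_right _ _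
  have h2 : min (sat F u) (sat D u) = sat F u := min_eq_left h.le
  rw [h2]
  exact this.trans_lt (hv1.trans_le hv2)

/-- If `F` and `D` are both maxmin-fair distributions over the feasible solutions of a
search problem instance, then they give every individual the same satisfaction
probability. -/
theorem maxminFair_sat_eq [Fintype α] [DecidableEq α]
    (sol : Finset α → Prop) (hsol : ∃ A, sol A)
    (F D : Finset α → ℝ) (hF : MaxminFair sol F) (hD : MaxminFair sol D) :
    ∀ u : α, sat F u = sat D u := by
  by_contra hne
  push_neg at hne
  obtain ⟨u0, hu0⟩ := hne
  classical
  set T : Finset α := Finset.univ.filter (fun u => sat F u ≠ sat D u) with hT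
  have hTne : T.Nonempty := ⟨u0, by simp [hT, hu0]⟩
  obtain ⟨u, huT, hmin⟩ :=
    T.exists_min_image (fun u => min (sat F u) (sat D u)) hTne
  have hune : sat F u ≠ sat D u := by simpa [hT] using huT
  rcases hune.lt_or_gt with h | h
  · obtain ⟨v, hv1, hv2⟩ := maxmin_aux hF hD.1 h
    have hvT : v ∈ T := by simp [hT, hv1]
    exact absurd (hmin v hvT) (not_le.mpr hv2)
  · obtain ⟨v, hv1, hv2⟩ := maxmin_aux hD hF.1 h
    have hvT : v ∈ T := by simp [hT, hv1.symm]
    have hv2' : min (sat F v) (sat D v) < min (sat F u) (sat D u) := by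
      rwa [min_comm (sat D v), min_comm (sat D u)] at hv2
    exact absurd (hmin v hvT) (not_le.mpr hv2')
end

section
/- A distribution F over S is maxmin-fair if and only if, for every distribution D over S, the vector F↑ is greater than or equal to the vector D↑ in lexicographic order. -/
/-!
A search problem instance consists of a finite type `α` of individuals and a nonempty
collection of feasible solutions, given by a predicate `sol : Finset α → Prop`.
`satSorted p` is the list of satisfaction probabilities of all individuals under `p`,
sorted in non-decreasing order (the vector `p↑`).
-/

variable {α : Type*}

/-- The vector `p↑` of satisfaction probabilities of `p`, sorted in non-decreasing order. -/
noncomputable def satSorted [Fintype α] [DecidableEq α] (p : Finset α → ℝ) : List ℝ :=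
  ((Finset.univ.val.map (sat p)).sort (· ≤ ·))

open Filter Topology Finset

/-! Sorted vectors are compared through the counts `#{u | f u ≤ t}`: `f↑ <lex g↑` as soon as, at
some level `t`, every individual that `g` puts at or below `t` is no better off under `f`, while
some individual is at or below `t` under `f` but above it under `g`. A maxmin-fair `F` beats any
`D` with different satisfactions in this sense, at level `D v` for the least `F`-satisfied
individual `v` losing under `D`. Conversely, if `u` gains under `D` while nobody at or below level
`F u` loses, then mixing a little of `D` into `F` lifts `u` above `F u` without pushing anyone down
to that level, which yields a lex-larger vector. -/

theorem List.lex_lt_of_countP_lt_of_countP_le {β : Type*} [LinearOrder β] :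
    ∀ {a b : List β}, a.Pairwise (· ≤ ·) → b.Pairwise (· ≤ ·) → a.length = b.length →
      ∀ x : β, b.countP (· ≤ x) < a.countP (· ≤ x) →
        (∀ y < x, b.countP (· ≤ y) ≤ a.countP (· ≤ y)) → List.Lex (· < ·) a b
  | [], _, _, _, _, x, hx, _ => by simp at hx
  | _ :: _, [], _, _, hl, _, _, _ => by simp at hl
  | h₁ :: t₁, h₂ :: t₂, ha, hb, hl, x, hx, hy => by
    rcases lt_trichotomy h₁ h₂ with hlt | rfl | hgt
    · exact .rel hlt
    · refine .cons (lex_lt_of_countP_lt_of_countP_le ha.of_cons hb.of_cons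
        (by simpa using hl) x ?_ fun y hyx => ?_)
      · by_cases h : h₁ ≤ x <;> simp [h] at hx ⊢ <;> omega
      · have := hy y hyx
        by_cases h : h₁ ≤ y <;> simp [h] at this ⊢ <;> omega
    · -- every entry of `a` is at least `h₁ > h₂`, so at threshold `h₂` only `b` counts anything
      have ha_ge : ∀ z ∈ h₁ :: t₁, h₁ ≤ z := by
        simpa using (pairwise_cons.mp ha).1
      have count_a (y : β) (hy : y < h₁) : (h₁ :: t₁).countP (· ≤ y) = 0 :=
        countP_eq_zero.mpr fun z hz => by simpa using hy.trans_le (ha_ge z hz)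
      have hx₁ : h₁ ≤ x := by
        by_contra! h
        have := count_a x h
        omega
      have := hy h₂ (hgt.trans_le hx₁)
      have : 0 < (h₂ :: t₂).countP (· ≤ h₂) := countP_pos_iff.mpr ⟨h₂, mem_cons_self, by simp⟩
      have := count_a h₂ hgt
      omega

section SortedValues

variable {β : Type*} [Fintype α] [LinearOrder β]

noncomputable def sortedValues (f : α → β) : List β :=
  (univ.val.map f).sort (· ≤ ·)

theorem countP_sortedValues (f : α → β) (x : β) :
    (sortedValues f).countP (· ≤ x) = #{u | f u ≤ x} := by
  rw [sortedValues, ← Multiset.coe_countP, Multiset.sort_eq, Multiset.countP_map]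
  rfl

theorem length_sortedValues (f : α → β) : (sortedValues f).length = Fintype.card α := by
  rw [sortedValues, Multiset.length_sort, Multiset.card_map]
  rfl

theorem sortedValues_lex_of_le_of_lt {f g : α → β} {t : β}
    (hle : ∀ w, g w ≤ t → f w ≤ g w) {v : α} (hfv : f v ≤ t) (hgv : t < g v) :
    List.Lex (· < ·) (sortedValues f) (sortedValues g) := by
  have hsub {y} (hy : y ≤ t) : ({u | g u ≤ y} : Finset α) ⊆ ({u | f u ≤ y} : Finset α) := by
    intro w
    simp only [mem_filter, mem_univ, true_and]
    exact fun hw => (hle w (hw.trans hy)).trans hw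
  refine List.lex_lt_of_countP_lt_of_countP_le (Multiset.pairwise_sort ..)
    (Multiset.pairwise_sort ..) (by rw [length_sortedValues, length_sortedValues]) t ?_ ?_
  · rw [countP_sortedValues, countP_sortedValues]
    refine card_lt_card ((ssubset_iff_of_subset (hsub le_rfl)).mpr ⟨v, ?_, ?_⟩)
    · simpa using hfv
    · simpa using hgv
  · intro y hy
    rw [countP_sortedValues, countP_sortedValues]
    exact card_le_card (hsub hy.le)

theorem sortedValues_eq_or_lex_of_maxmin {f g : α → β}
    (hfair : ∀ u, f u < g u → ∃ v, g v < f v ∧ f v ≤ f u) :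
    sortedValues g = sortedValues f ∨ List.Lex (· < ·) (sortedValues g) (sortedValues f) := by
  by_cases hdrop : ∃ v, g v < f v
  · obtain ⟨v, hv, hmin⟩ := exists_min_image {v | g v < f v} f
      (by simpa [Finset.Nonempty] using hdrop)
    simp only [mem_filter, mem_univ, true_and] at hv hmin
    refine .inr (sortedValues_lex_of_le_of_lt (t := g v) (fun w hw => ?_) le_rfl hv)
    by_contra! hgain
    obtain ⟨v', hv', hv'w⟩ := hfair w hgain
    exact (hmin v' hv').not_gt (hv'w.trans_lt (hw.trans_lt hv))
  · push Not at hdrop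
    have hfg : g = f := funext fun w => (hdrop w).antisymm' <| not_lt.mp fun hgain =>
      let ⟨v, hv, _⟩ := hfair w hgain
      (hdrop v).not_gt hv
    exact .inl (congrArg sortedValues hfg)

end SortedValues

theorem satSorted_eq_sortedValues [Fintype α] [DecidableEq α] (p : Finset α → ℝ) :
    satSorted p = sortedValues (sat p) :=
  rfl

theorem exists_sortedValues_lex_mix [Fintype α] {f g : α → ℝ} {u : α} (hu : f u < g u)
    (hno : ∀ v, g v < f v → f u < f v) :
    ∃ ε, 0 < ε ∧ ε ≤ 1 ∧
      List.Lex (· < ·) (sortedValues f) (sortedValues fun w => (1 - ε) * f w + ε * g w) := by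
  have hsmall : ∀ᶠ ε in 𝓝[>] (0 : ℝ),
      ε ≤ 1 ∧ ∀ v, f u < f v → f u < (1 - ε) * f v + ε * g v := by
    refine .and ?_ (eventually_all.mpr fun v => ?_)
    · exact nhdsWithin_le_nhds (eventually_le_nhds zero_lt_one)
    · by_cases hv : f u < f v
      · have hcont : Tendsto (fun ε : ℝ => (1 - ε) * f v + ε * g v) (𝓝 0) (𝓝 (f v)) := by
          have : Continuous fun ε : ℝ => (1 - ε) * f v + ε * g v := by fun_prop
          simpa using this.tendsto 0
        exact nhdsWithin_le_nhds ((hcont.eventually (lt_mem_nhds hv)).mono fun _ hε _ => hε)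
      · exact .of_forall fun _ hv' => absurd hv' hv
  obtain ⟨ε, ⟨hε1, habove⟩, hε0⟩ := (hsmall.and self_mem_nhdsWithin).exists
  refine ⟨ε, hε0, hε1, sortedValues_lex_of_le_of_lt (t := f u) (v := u) (fun w hw => ?_) le_rfl ?_⟩
  · have hfw : f w ≤ f u := not_lt.mp fun h => (habove w h).not_ge hw
    have hgw : f w ≤ g w := not_lt.mp fun h => (hno w h).not_ge hfw
    nlinarith
  · nlinarith

theorem IsDistrib.mix [Fintype α] {sol : Finset α → Prop} {p q : Finset α → ℝ}
    (hp : IsDistrib sol p) (hq : IsDistrib sol q) {ε : ℝ} (hε0 : 0 ≤ ε) (hε1 : ε ≤ 1) :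
    IsDistrib sol fun A => (1 - ε) * p A + ε * q A := by
  refine ⟨fun A => add_nonneg (mul_nonneg (sub_nonneg.mpr hε1) (hp.1 A)) (mul_nonneg hε0 (hq.1 A)),
    fun A hA => ?_, ?_⟩
  · by_cases hpA : p A = 0
    · exact hq.2.1 A fun hqA => hA (by simp [hpA, hqA])
    · exact hp.2.1 A hpA
  · rw [sum_add_distrib, ← mul_sum, ← mul_sum, hp.2.2, hq.2.2]
    ring

theorem sat_mix [Fintype α] [DecidableEq α] (p q : Finset α → ℝ) (ε : ℝ) (u : α) :
    sat (fun A => (1 - ε) * p A + ε * q A) u = (1 - ε) * sat p u + ε * sat q u := by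
  simp only [sat, mul_sum, ← sum_add_distrib]
  refine sum_congr rfl fun A _ => ?_
  split_ifs <;> ring

theorem maxminFair_iff_lex_greatest_general [Fintype α] [DecidableEq α]
    (sol : Finset α → Prop)
    (F : Finset α → ℝ) (hF : IsDistrib sol F) :
    MaxminFair sol F ↔
      ∀ D, IsDistrib sol D →
        satSorted D = satSorted F ∨ List.Lex (· < ·) (satSorted D) (satSorted F) := by
  simp only [satSorted_eq_sortedValues]
  constructor
  · rintro ⟨-, hfair⟩ D hD
    exact sortedValues_eq_or_lex_of_maxmin (hfair D hD)
  · intro hlex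
    refine ⟨hF, fun D hD u hu => ?_⟩
    by_contra! hno
    obtain ⟨ε, hε0, hε1, hlt⟩ := exists_sortedValues_lex_mix hu hno
    have hmix := hlex _ (hF.mix hD hε0.le hε1)
    rw [funext (sat_mix F D ε)] at hmix
    rcases hmix with heq | hgt
    · exact irrefl _ (heq ▸ hlt)
    · exact asymm hlt hgt

/-- A distribution `F` over the feasible solutions is maxmin-fair if and only if,
for every distribution `D` over the feasible solutions, the sorted vector `F↑` is
greater than or equal to the sorted vector `D↑` in lexicographic order. -/
theorem maxminFair_iff_lex_greatest [Fintype α] [DecidableEq α]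
    (sol : Finset α → Prop) (hsol : ∃ A, sol A)
    (F : Finset α → ℝ) (hF : IsDistrib sol F) :
    MaxminFair sol F ↔
      ∀ D, IsDistrib sol D →
        satSorted D = satSorted F ∨ List.Lex (· < ·) (satSorted D) (satSorted F) :=
  maxminFair_iff_lex_greatest_general sol F hF
end

section
/- If F and D are both minmax-Pareto distributions over the feasible solutions S of a search problem instance (U, S), then F[u] = D[u] for every individual u ∈ U. -/
/-!
A search problem instance consists of a finite type `α` of individuals and a nonempty
collection of feasible solutions, given by a predicate `sol : Finset α → Prop`.
-/

variable {α : Type*}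

/-- `D` is Pareto-efficient: there is no distribution that is at least as good for
everyone and strictly better for someone. -/
def ParetoEff [Fintype α] [DecidableEq α] (sol : Finset α → Prop) (D : Finset α → ℝ) : Prop :=
  IsDistrib sol D ∧
    ¬ ∃ D', IsDistrib sol D' ∧ (∀ u, sat D u ≤ sat D' u) ∧ ∃ u, sat D u < sat D' u

/-- `F` is minmax-Pareto: it is Pareto-efficient, and decreasing any individual's
satisfaction probability below `F`'s (while staying Pareto-efficient) requires increasing
it for some individual who is no worse off. -/
def MinmaxPareto [Fintype α] [DecidableEq α] (sol : Finset α → Prop) (F : Finset α → ℝ) : Prop :=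
  ParetoEff sol F ∧
    ∀ D, ParetoEff sol D → ∀ u, sat D u < sat F u →
      ∃ v, sat F v < sat D v ∧ sat F u ≤ sat F v

/-- If `F` and `D` are both minmax-Pareto distributions over the feasible solutions of a
search problem instance, then they give every individual the same satisfaction
probability. -/
theorem minmaxPareto_sat_eq [Fintype α] [DecidableEq α]
    (sol : Finset α → Prop) (hsol : ∃ A, sol A)
    (F D : Finset α → ℝ) (hF : MinmaxPareto sol F) (hD : MinmaxPareto sol D) :
    ∀ u : α, sat F u = sat D u := by
  by_contra h
  push_neg at h
  obtain ⟨u0, hu0⟩ := h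
  have hne : (Finset.univ.filter (fun w => sat F w ≠ sat D w)).Nonempty :=
    ⟨u0, by simp [hu0]⟩
  obtain ⟨u, hu, hmax⟩ :=
    Finset.exists_max_image _ (fun w => max (sat F w) (sat D w)) hne
  simp only [Finset.mem_filter, Finset.mem_univ, true_and] at hu hmax
  rcases lt_or_gt_of_ne hu with hlt | hgt
  · -- sat F u < sat D u : use D's minmax property with F
    obtain ⟨v, hv1, hv2⟩ := hD.2 F hF.1 u hlt
    have hvm := hmax v (ne_of_gt hv1)
    have h1 := le_max_right (sat F v) (sat D v)
    have h2 := max_le_iff.mp hvm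
    have : max (sat F u) (sat D u) = sat D u := max_eq_right hlt.le
    linarith [h2.2]
  · -- sat D u < sat F u : use F's minmax property with D
    obtain ⟨v, hv1, hv2⟩ := hF.2 D hD.1 u hgt
    have hvm := hmax v (ne_of_lt hv1)
    have h2 := max_le_iff.mp hvm
    have : max (sat F u) (sat D u) = sat F u := max_eq_left hgt.le
    linarith [h2.2]
end

section
/- Let M be a matroid on a finite nonempty ground set L with rank function ρ. Then the maximum, over all distributions D on the independent sets of M, of the minimum satisfaction probability min_{u∈L} D[u] is equal to min{ ρ(X)/|X| : ∅ ≠ X ⊆ L }. In particular this value is the minimum satisfaction probability of any maxmin-fair distribution over the independent sets of M. -/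
open scoped Classical

variable {α : Type*}

/-- The rank of the finite set `X` in the matroid `M`: the size of a largest
independent subset of `X`. -/
noncomputable def rnk [Fintype α] (M : Matroid α) (X : Finset α) : ℕ :=
  (X.powerset.filter fun A : Finset α => M.Indep (A : Set α)).sup Finset.card

/-!
For a distribution `D` on independent sets and any `X`, `min_u D[u] · |X| ≤ E |A ∩ X| ≤ ρ(X)`,
so no distribution beats `β = min ρ(X) / |X|`. Conversely, separating the compact convex set of
satisfaction vectors from the orthant `{w | β ≤ w}` by a hyperplane reduces the existence of a
distribution with `D[u] ≥ β` for all `u` to this: every nonnegative weighting `y` of `L` has an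
independent set of weight at least `β · ∑ y`. A greedy basis provides one, because `β |X| ≤ ρ(X)`.
Finally, if a maxmin-fair `F` had `F[u] < β`, that distribution would raise `u` while lowering no
`v` with `F[v] ≤ F[u] < β`, as it gives everyone at least `β`.
-/

section Distributions

variable [Fintype α] {sol : Finset α → Prop}

def satLinearMap [DecidableEq α] : (Finset α → ℝ) →ₗ[ℝ] α → ℝ where
  toFun := sat
  map_add' p q := by
    ext u
    simp only [sat, Pi.add_apply, ← Finset.sum_add_distrib, ite_add_ite, add_zero]
  map_smul' c p := by
    ext u
    simp only [sat, Pi.smul_apply, smul_eq_mul, RingHom.id_apply, Finset.mul_sum, mul_ite,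
      mul_zero]

lemma sat_pi_single [DecidableEq α] (A : Finset α) (u : α) :
    sat (Pi.single A 1) u = if u ∈ A then 1 else 0 := by
  rw [sat, Finset.sum_eq_single A (fun B _ hB => by simp [hB]) (by simp)]
  simp

lemma isDistrib_pi_single [DecidableEq α] {A : Finset α} (hA : sol A) :
    IsDistrib sol (Pi.single A 1) := by
  refine ⟨fun B => ?_, fun B hB => ?_, by simp⟩
  · rw [Pi.single_apply]; split_ifs <;> norm_num
  · rw [Pi.single_apply] at hB; split_ifs at hB with h
    · exact h ▸ hA
    · exact absurd rfl hB

lemma convex_setOf_isDistrib : Convex ℝ {p | IsDistrib sol p} := by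
  rintro p ⟨hp0, hpsol, hp1⟩ q ⟨hq0, hqsol, hq1⟩ a b ha hb hab
  refine ⟨fun A => ?_, fun A hA => ?_, ?_⟩
  · simp only [Pi.add_apply, Pi.smul_apply, smul_eq_mul]
    have := hp0 A; have := hq0 A; positivity
  · by_contra hsol
    have hpA : p A = 0 := by_contra fun h => hsol (hpsol A h)
    have hqA : q A = 0 := by_contra fun h => hsol (hqsol A h)
    simp [hpA, hqA] at hA
  · simp only [Pi.add_apply, Pi.smul_apply, smul_eq_mul, Finset.sum_add_distrib,
      ← Finset.mul_sum, hp1, hq1, hab, mul_one]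

lemma isCompact_setOf_isDistrib : IsCompact {p | IsDistrib sol p} := by
  refine (isCompact_stdSimplex ℝ (Finset α)).of_isClosed_subset ?_ fun p hp => ⟨hp.1, hp.2.2⟩
  have : {p | IsDistrib sol p} =
      stdSimplex ℝ (Finset α) ∩ ⋂ A, ⋂ (_ : ¬ sol A), {p | p A = 0} := by
    ext p
    simp only [IsDistrib, stdSimplex, Set.mem_inter_iff, Set.mem_iInter, Set.mem_ofPred_eq,
      not_imp_comm (a := p _ = 0)]
    tauto
  rw [this]
  exact (isClosed_stdSimplex ℝ _).inter <| isClosed_iInter fun A => isClosed_iInter fun _ =>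
    isClosed_eq (continuous_apply A) continuous_const

lemma nonneg_of_forall_lt_add_mul {a v y : ℝ} (h : ∀ t : ℝ, 0 ≤ t → v < a + t * y) : 0 ≤ y := by
  by_contra! hy
  have hva : v < a := by simpa using h 0 le_rfl
  have := h ((a - v) / -y) (div_nonneg (by linarith) (by linarith))
  rw [div_mul_eq_mul_div, mul_div_assoc, div_neg, div_self hy.ne] at this
  linarith

theorem exists_isDistrib_forall_le_sat [DecidableEq α] {b : ℝ}
    (h : ∀ y : α → ℝ, (∀ u, 0 ≤ y u) → ∃ A, sol A ∧ b * ∑ u, y u ≤ ∑ a ∈ A, y a) :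
    ∃ D, IsDistrib sol D ∧ ∀ u, b ≤ sat D u := by
  by_contra! hnot
  have hdisj : Disjoint (satLinearMap '' {p | IsDistrib sol p}) (Set.Ici fun _ => b) := by
    refine Set.disjoint_left.2 ?_
    rintro _ ⟨D, hD, rfl⟩ hb
    obtain ⟨u, hu⟩ := hnot D hD
    exact (hb u).not_gt hu
  obtain ⟨f, s, t, hfP, hst, hfK⟩ := geometric_hahn_banach_compact_closed
    (convex_setOf_isDistrib.linear_image satLinearMap)
    (isCompact_setOf_isDistrib.image satLinearMap.continuous_of_finiteDimensional)
    (convex_Ici _) isClosed_Ici hdisj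
  set y : α → ℝ := fun u => f fun v => if u = v then 1 else 0
  have hf : ∀ w, f w = ∑ u, w u * y u := fun w =>
    LinearMap.pi_apply_eq_sum_univ f.toLinearMap w
  have hy : ∀ u, 0 ≤ y u := fun u => nonneg_of_forall_lt_add_mul fun τ hτ => by
    have hmem : ((fun _ => b) + τ • fun v => if u = v then (1 : ℝ) else 0) ∈ Set.Ici fun _ => b :=
      fun v => by simp only [Pi.add_apply, Pi.smul_apply, smul_eq_mul]; split_ifs <;> simp [hτ]
    simpa using hfK _ hmem
  obtain ⟨A, hA, hbA⟩ := h y hy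
  have hA_lt : ∑ a ∈ A, y a < s := by
    have := hfP _ ⟨_, isDistrib_pi_single hA, rfl⟩
    simpa [satLinearMap, hf, sat_pi_single, Finset.sum_ite_mem] using this
  have hb_gt : t < b * ∑ u, y u := by
    simpa [hf, Finset.mul_sum] using hfK (fun _ => b) Set.self_mem_Ici
  linarith

lemma sum_sat_eq [DecidableEq α] (p : Finset α → ℝ) (X : Finset α) :
    ∑ u ∈ X, sat p u = ∑ A, ((X ∩ A).card : ℝ) * p A := by
  simp only [sat]
  rw [Finset.sum_comm]
  refine Finset.sum_congr rfl fun A _ => ?_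
  rw [Finset.sum_ite_mem, Finset.sum_const, nsmul_eq_mul]

theorem MaxminFair.le_iInf_sat [DecidableEq α] [Nonempty α] {F D : Finset α → ℝ} {c : ℝ}
    (hF : MaxminFair sol F) (hD : IsDistrib sol D) (hc : ∀ u, c ≤ sat D u) :
    c ≤ ⨅ u, sat F u := by
  by_contra! hlt
  obtain ⟨u, hu⟩ := exists_lt_of_ciInf_lt hlt
  obtain ⟨v, hDv, hFv⟩ := hF.2 D hD u (hu.trans_le (hc u))
  linarith [hc v]

end Distributions

section Matroid

variable [Fintype α] (M : Matroid α)

lemma card_le_rnk {I X : Finset α} (hI : M.Indep I) (hIX : I ⊆ X) : I.card ≤ rnk M X :=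
  Finset.le_sup (Finset.mem_filter.2 ⟨Finset.mem_powerset.2 hIX, hI⟩)

lemma rnk_eq_eRk (X : Finset α) : (rnk M X : ℕ∞) = M.eRk X := by
  apply le_antisymm
  · obtain ⟨I, hI, hcard⟩ := Finset.exists_mem_eq_sup
      (X.powerset.filter fun A : Finset α => M.Indep (A : Set α))
      ⟨∅, Finset.mem_filter.2 ⟨Finset.empty_mem_powerset X, by simp⟩⟩
      Finset.card
    obtain ⟨hIX, hIi⟩ := Finset.mem_filter.1 hI
    rw [rnk, hcard, ← Set.encard_coe_eq_coe_finsetCard]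
    exact hIi.encard_le_eRk_of_subset (Finset.coe_subset.2 (Finset.mem_powerset.1 hIX))
  · obtain ⟨J, hJ⟩ := M.exists_isBasis' X
    obtain ⟨J, rfl⟩ := (Set.toFinite J).exists_finset_coe
    rw [← hJ.encard_eq_eRk, Set.encard_coe_eq_coe_finsetCard, Nat.cast_le]
    exact card_le_rnk M hJ.indep (Finset.coe_subset.1 hJ.subset)

lemma exists_indep_superset_card_eq_rnk {I S : Finset α} (hI : M.Indep I) (hIS : I ⊆ S) :
    ∃ B : Finset α, M.Indep B ∧ I ⊆ B ∧ B ⊆ S ∧ B.card = rnk M S := by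
  obtain ⟨J, hJ, hIJ⟩ := hI.subset_isBasis'_of_subset (Finset.coe_subset.2 hIS)
  obtain ⟨B, rfl⟩ := (Set.toFinite J).exists_finset_coe
  refine ⟨B, hJ.indep, Finset.coe_subset.1 hIJ, Finset.coe_subset.1 hJ.subset, ?_⟩
  rw [← Nat.cast_inj (R := ℕ∞), rnk_eq_eRk, ← hJ.encard_eq_eRk, Set.encard_coe_eq_coe_finsetCard]

theorem exists_indep_mul_sum_le {b : ℝ} (hb : ∀ X : Finset α, X.Nonempty → b * X.card ≤ rnk M X)
    (z : α → ℝ) (S : Finset α) (hz : ∀ u ∈ S, 0 ≤ z u) :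
    ∃ A ⊆ S, M.Indep A ∧ b * ∑ u ∈ S, z u ≤ ∑ a ∈ A, z a := by
  induction S using Finset.strongInduction generalizing z with
  | H S ih =>
  rcases S.eq_empty_or_nonempty with rfl | hS
  · exact ⟨∅, subset_rfl, by simp, by simp⟩
  obtain ⟨u₀, hu₀, hmin⟩ := S.exists_min_image z hS
  set m := z u₀
  -- Split `z` into the layer `m` on all of `S` and the rest, which vanishes at `u₀`; a basis of `S`
  -- extending the set found for the rest collects `m * rnk M S` from the layer.
  obtain ⟨A, hAS, hA, hsumA⟩ := ih (S.erase u₀) (Finset.erase_ssubset hu₀) (fun u => z u - m)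
    fun u hu => sub_nonneg.2 (hmin u (Finset.mem_of_mem_erase hu))
  obtain ⟨B, hB, hAB, hBS, hBcard⟩ :=
    exists_indep_superset_card_eq_rnk M hA (hAS.trans (S.erase_subset u₀))
  refine ⟨B, hBS, hB, ?_⟩
  have hS_eq : ∑ u ∈ S, z u = ∑ u ∈ S.erase u₀, (z u - m) + m * S.card := by
    rw [Finset.sum_erase (f := fun u => z u - m) S (sub_self m), Finset.sum_sub_distrib,
      Finset.sum_const, nsmul_eq_mul]
    ring
  have hB_eq : ∑ a ∈ B, z a = ∑ a ∈ B, (z a - m) + m * B.card := by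
    rw [Finset.sum_sub_distrib, Finset.sum_const, nsmul_eq_mul]
    ring
  have hAB_le : ∑ a ∈ A, (z a - m) ≤ ∑ a ∈ B, (z a - m) :=
    Finset.sum_le_sum_of_subset_of_nonneg hAB fun a ha _ => sub_nonneg.2 (hmin a (hBS ha))
  have hm : m * (b * S.card) ≤ m * rnk M S := mul_le_mul_of_nonneg_left (hb S hS) (hz u₀ hu₀)
  rw [hS_eq, hB_eq, hBcard]
  linarith

lemma sum_sat_le_rnk [DecidableEq α] {D : Finset α → ℝ}
    (hD : IsDistrib (fun A : Finset α => M.Indep (A : Set α)) D) (X : Finset α) :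
    ∑ u ∈ X, sat D u ≤ rnk M X := by
  obtain ⟨hD0, hDsol, hD1⟩ := hD
  rw [sum_sat_eq]
  calc ∑ A, ((X ∩ A).card : ℝ) * D A ≤ ∑ A, (rnk M X : ℝ) * D A := by
        refine Finset.sum_le_sum fun A _ => ?_
        rcases eq_or_ne (D A) 0 with hA | hA
        · simp [hA]
        · refine mul_le_mul_of_nonneg_right ?_ (hD0 A)
          exact_mod_cast card_le_rnk M ((hDsol A hA).subset (by simp)) Finset.inter_subset_left
    _ = rnk M X := by rw [← Finset.mul_sum, hD1, mul_one]

lemma iInf_sat_mul_card_le_rnk [DecidableEq α] {D : Finset α → ℝ}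
    (hD : IsDistrib (fun A : Finset α => M.Indep (A : Set α)) D) (X : Finset α) :
    (⨅ u, sat D u) * X.card ≤ rnk M X :=
  calc (⨅ u, sat D u) * X.card = X.card • ⨅ u, sat D u := by rw [nsmul_eq_mul, mul_comm]
    _ ≤ ∑ u ∈ X, sat D u :=
      X.card_nsmul_le_sum _ _ fun u _ => ciInf_le (Finite.bddBelow_range _) u
    _ ≤ rnk M X := sum_sat_le_rnk M hD X

end Matroid

theorem maxmin_value_matroid_general [Fintype α] [DecidableEq α] [Nonempty α]
    (M : Matroid α) :
    IsGreatest
      {x : ℝ | ∃ D, IsDistrib (fun A : Finset α => M.Indep (A : Set α)) D ∧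
          x = ⨅ u : α, sat D u}
      (sInf {x : ℝ | ∃ X : Finset α, X.Nonempty ∧ x = (rnk M X : ℝ) / X.card}) ∧
    ∀ F, MaxminFair (fun A : Finset α => M.Indep (A : Set α)) F →
      (⨅ u : α, sat F u) =
        sInf {x : ℝ | ∃ X : Finset α, X.Nonempty ∧ x = (rnk M X : ℝ) / X.card} := by
  set T := {x : ℝ | ∃ X : Finset α, X.Nonempty ∧ x = (rnk M X : ℝ) / X.card}
  have hT : T.Finite := (Set.finite_range fun X : Finset α => (rnk M X : ℝ) / X.card).subset
    (by rintro _ ⟨X, -, rfl⟩; exact ⟨X, rfl⟩)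
  obtain ⟨X₀, hX₀, hX₀_eq⟩ : sInf T ∈ T :=
    Set.Nonempty.csInf_mem ⟨_, Finset.univ, Finset.univ_nonempty, rfl⟩ hT
  have hb : ∀ X : Finset α, X.Nonempty → sInf T * X.card ≤ rnk M X := fun X hX =>
    (le_div_iff₀ (by exact_mod_cast hX.card_pos)).1 (csInf_le hT.bddBelow ⟨X, hX, rfl⟩)
  have upper : ∀ D, IsDistrib (fun A : Finset α => M.Indep (A : Set α)) D →
      (⨅ u, sat D u) ≤ sInf T := fun D hD => by
    rw [hX₀_eq, le_div_iff₀ (by exact_mod_cast hX₀.card_pos)]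
    exact iInf_sat_mul_card_le_rnk M hD X₀
  obtain ⟨D, hD, hDT⟩ := exists_isDistrib_forall_le_sat fun y hy => by
    obtain ⟨A, -, hA, hyA⟩ := exists_indep_mul_sum_le M hb y Finset.univ fun u _ => hy u
    exact ⟨A, hA, hyA⟩
  refine ⟨⟨⟨D, hD, le_antisymm (le_ciInf hDT) (upper D hD)⟩, ?_⟩, fun F hF =>
    le_antisymm (upper F hF.1) (hF.le_iInf_sat hD hDT)⟩
  rintro _ ⟨D', hD', rfl⟩
  exact upper D' hD'

/-- Let `M` be a matroid on a finite nonempty ground set (the whole type `α`, so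
`M.E = Set.univ`), with rank function `rnk M`.  The maximum, over all distributions `D`
on the independent sets of `M`, of the minimum satisfaction probability `⨅ u, sat D u`
equals `min { rnk M X / |X| : ∅ ≠ X }`; and this value is the minimum satisfaction
probability of any maxmin-fair distribution over the independent sets of `M`. -/
theorem maxmin_value_matroid [Fintype α] [DecidableEq α] [Nonempty α]
    (M : Matroid α) (hE : M.E = Set.univ) :
    IsGreatest
      {x : ℝ | ∃ D, IsDistrib (fun A : Finset α => M.Indep (A : Set α)) D ∧
          x = ⨅ u : α, sat D u}
      (sInf {x : ℝ | ∃ X : Finset α, X.Nonempty ∧ x = (rnk M X : ℝ) / X.card}) ∧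
    ∀ F, MaxminFair (fun A : Finset α => M.Indep (A : Set α)) F →
      (⨅ u : α, sat F u) =
        sInf {x : ℝ | ∃ X : Finset α, X.Nonempty ∧ x = (rnk M X : ℝ) / X.card} :=
  maxmin_value_matroid_general M
end

section
/- Let G be a finite bipartite graph with bipartition (L, R) and let {α_v : v ∈ L} be real numbers in [0, 1]. There exists a probability distribution D over matchings of G such that the coverage probability D[v] ≥ α_v for all v ∈ L if and only if for every S ⊆ L one has |Γ(S)| ≥ Σ_{v∈S} α_v. -/
/-!
A finite bipartite graph with bipartition `(L, R)` is modelled by its edge set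
`E : Finset (L × R)`, where `L` and `R` are finite types.  A matching is a subset of `E`
in which no two distinct edges share an endpoint.  `nbhd E S` is the set `Γ(S)` of
neighbours in `R` of a set `S ⊆ L` of left vertices.  A distribution of matchings is a
nonnegative function on `Finset (L × R)`, supported on matchings, summing to `1`;
`covP p u` is the probability that the left vertex `u` is covered by the random matching.
-/

variable {L R : Type*}

/-- `M` is a matching of the bipartite graph with edge set `E`. -/
def IsMatching [DecidableEq L] [DecidableEq R]
    (E M : Finset (L × R)) : Prop :=
  M ⊆ E ∧ ∀ e ∈ M, ∀ f ∈ M, e ≠ f → e.1 ≠ f.1 ∧ e.2 ≠ f.2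

/-- The neighbourhood `Γ(S) ⊆ R` of a set `S ⊆ L` of left vertices. -/
def nbhd [DecidableEq L] [DecidableEq R] (E : Finset (L × R)) (S : Finset L) : Finset R :=
  (E.filter (fun e => e.1 ∈ S)).image Prod.snd

/-- `p` is a probability distribution over the matchings of the graph with edge set `E`. -/
def IsDistribM [Fintype L] [Fintype R] [DecidableEq L] [DecidableEq R]
    (E : Finset (L × R)) (p : Finset (L × R) → ℝ) : Prop :=
  (∀ M, 0 ≤ p M) ∧ (∀ M, p M ≠ 0 → IsMatching E M) ∧ (∑ M : Finset (L × R), p M) = 1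

/-- The coverage (satisfaction) probability of the left vertex `u` under the
distribution of matchings `p`. -/
def covP [Fintype L] [Fintype R] [DecidableEq L] [DecidableEq R]
    (p : Finset (L × R) → ℝ) (u : L) : ℝ :=
  ∑ M : Finset (L × R), if u ∈ M.image Prod.fst then p M else 0

/-- `F` is a maxmin-fair distribution of matchings for the one-sided bipartite matching
problem (the users are the left vertices `L`). -/
def MaxminFairM [Fintype L] [Fintype R] [DecidableEq L] [DecidableEq R]
    (E : Finset (L × R)) (F : Finset (L × R) → ℝ) : Prop :=
  IsDistribM E F ∧
    ∀ D, IsDistribM E D → ∀ u : L, covP F u < covP D u →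
      ∃ v : L, covP D v < covP F v ∧ covP F v ≤ covP F u

/-!
A matching covers at most `|Γ(S)|` vertices of `S`; averaging over the distribution gives the
forward direction.

Conversely, the coverage vectors of distributions form a compact convex subset of `ℝ^L`, so by
Hahn–Banach it suffices that for every weight `w ≥ 0` some matching covers total weight at least
`∑ w_v α_v`. This is the greedy algorithm for the transversal matroid with rank function
`r(S) = min_{T ⊆ S} |S \ T| + |Γ(T)|`: `r` is submodular, Hall's condition together with `α ≤ 1`
gives `α(S) ≤ r(S)`, and sets `A` with `r(A) = |A|` are matchable by Hall's theorem. Inserting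
the vertices in order of decreasing weight and extending a basis `A` of the inserted set `U`
whenever the rank grows keeps `m (r(U) - α(U)) ≤ w(A) - ∑_{v ∈ U} w_v α_v` for every `m` below
the weights on `U`; at the end `m = 0` gives the claim.
-/

open Finset

theorem exists_mem_ge_of_forall_weighted_le {ι : Type*} [Fintype ι] {P : Set (ι → ℝ)}
    (hPc : Convex ℝ P) (hPk : IsCompact P) (a : ι → ℝ)
    (h : ∀ w : ι → ℝ, 0 ≤ w → ∃ x ∈ P, ∑ i, w i * a i ≤ ∑ i, w i * x i) :
    ∃ x ∈ P, a ≤ x := by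
  classical
  by_contra! hP
  obtain ⟨f, u, v, hfP, huv, hfa⟩ := geometric_hahn_banach_compact_closed hPc hPk
    (convex_Ici a) isClosed_Ici (Set.disjoint_left.2 fun x hx hax => hP x hx hax)
  have hva : v < f a := hfa a Set.self_mem_Ici
  set w : ι → ℝ := fun i => f (Pi.single i 1)
  have hf : ∀ x, f x = ∑ i, w i * x i := fun x => by
    conv_lhs => rw [pi_eq_sum_univ' x]
    simp [w, mul_comm]
  -- `f` is bounded below on each ray `a + t • Pi.single i 1`, `t ≥ 0`, inside `Set.Ici a`.
  have hw : ∀ i, 0 ≤ w i := fun i => by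
    by_contra! hi
    set t := (f a - v) / -w i
    have ht : 0 ≤ t := div_nonneg (by linarith) (by linarith)
    have hmem : a + t • Pi.single i 1 ∈ Set.Ici a := fun j => by
      by_cases hj : j = i
      · subst hj; simpa
      · simp [hj]
    have := hfa _ hmem
    rw [map_add, map_smul, smul_eq_mul, div_mul_eq_mul_div, div_neg,
      mul_div_cancel_right₀ _ hi.ne] at this
    linarith
  obtain ⟨x, hxP, hx⟩ := h w hw
  linarith [hfP x hxP, hf x, hf a]

section Distributions
variable [DecidableEq L] [DecidableEq R] {E : Finset (L × R)}

theorem IsMatching.card_inter_image_fst_le {M : Finset (L × R)} (hM : IsMatching E M)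
    (S : Finset L) : #(S ∩ M.image Prod.fst) ≤ #(nbhd E S) := by
  set MS := M.filter (·.1 ∈ S)
  have hfst : S ∩ M.image Prod.fst = MS.image Prod.fst := by
    ext v; simp [MS, and_comm, eq_comm]
  have hsnd : Set.InjOn Prod.snd (MS : Set (L × R)) := fun e he f hf hef => by
    by_contra hne
    exact (hM.2 e (mem_filter.1 he).1 f (mem_filter.1 hf).1 hne).2 hef
  calc #(S ∩ M.image Prod.fst) ≤ #MS := hfst ▸ card_image_le
    _ = #(MS.image Prod.snd) := (card_image_of_injOn hsnd).symm
    _ ≤ #(nbhd E S) := card_le_card (image_subset_image (filter_subset_filter _ hM.1))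

variable [Fintype L] [Fintype R]

theorem sum_covP_le_card_nbhd {p : Finset (L × R) → ℝ} (hp : IsDistribM E p) (S : Finset L) :
    ∑ v ∈ S, covP p v ≤ #(nbhd E S) := by
  obtain ⟨hnonneg, hsupp, hsum⟩ := hp
  calc ∑ v ∈ S, covP p v = ∑ M, #(S ∩ M.image Prod.fst) * p M := by
        simp only [covP]
        rw [sum_comm]
        refine sum_congr rfl fun M _ => ?_
        rw [sum_ite_mem, sum_const, nsmul_eq_mul]
    _ ≤ ∑ M, #(nbhd E S) * p M := sum_le_sum fun M _ => by
        by_cases h : p M = 0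
        · simp [h]
        · exact mul_le_mul_of_nonneg_right
            (by exact_mod_cast (hsupp M h).card_inter_image_fst_le S) (hnonneg M)
    _ = #(nbhd E S) := by rw [← mul_sum, hsum, mul_one]

variable (L R) in
def covPLinearMap : (Finset (L × R) → ℝ) →ₗ[ℝ] L → ℝ where
  toFun := covP
  map_add' p q := by ext; simp [covP, sum_add_distrib, ite_add_zero]
  map_smul' c p := by ext; simp [covP, mul_sum]

variable (E) in
theorem setOf_isDistribM : {p | IsDistribM E p} =
    stdSimplex ℝ (Finset (L × R)) ∩ {p | ∀ M, ¬IsMatching E M → p M = 0} := by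
  ext p
  simp only [IsDistribM, stdSimplex, Set.mem_inter_iff, Set.mem_ofPred_eq, not_imp_comm]
  tauto

variable (E) in
theorem isCompact_setOf_isDistribM : IsCompact {p | IsDistribM E p} := by
  rw [setOf_isDistribM]
  refine (isCompact_stdSimplex ℝ _).inter_right ?_
  simp only [Set.ofPred_forall]
  exact isClosed_iInter fun M => isClosed_iInter fun _ =>
    isClosed_eq (continuous_apply M) continuous_const

variable (E) in
theorem convex_setOf_isDistribM : Convex ℝ {p | IsDistribM E p} := by
  rw [setOf_isDistribM]
  refine (convex_stdSimplex ℝ _).inter fun p hp q hq s t _ _ _ M hM => ?_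
  simp [hp M hM, hq M hM]

theorem isDistribM_single {M : Finset (L × R)} (hM : IsMatching E M) :
    IsDistribM E (Pi.single M 1) := by
  refine ⟨fun N => ?_, fun N hN => ?_, by simp⟩
  · by_cases h : N = M <;> simp [h]
  · by_cases h : N = M
    · exact h ▸ hM
    · simp [h] at hN

theorem covP_single (M : Finset (L × R)) (v : L) :
    covP (Pi.single M 1) v = if v ∈ M.image Prod.fst then 1 else 0 := by
  rw [covP, Fintype.sum_eq_single M fun N hN => by simp [hN]]
  simp

end Distributions

section Rank
variable [DecidableEq L] [DecidableEq R] (E : Finset (L × R))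

theorem nbhd_mono {S T : Finset L} (h : S ⊆ T) : nbhd E S ⊆ nbhd E T :=
  image_subset_image (monotone_filter_right E fun _ _ he => h he)

theorem nbhd_union (S T : Finset L) : nbhd E (S ∪ T) = nbhd E S ∪ nbhd E T := by
  simp only [nbhd, ← image_union, ← filter_or, mem_union]

/-- By the König–Ore formula this is the largest number of vertices of `S` covered by a
matching (the rank function of the transversal matroid); we only use the formula itself. -/
def matchRank (S : Finset L) : ℕ :=
  S.powerset.inf' (powerset_nonempty S) fun T => #(S \ T) + #(nbhd E T)

variable {E}

theorem matchRank_le {S T : Finset L} (h : T ⊆ S) :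
    matchRank E S ≤ #(S \ T) + #(nbhd E T) :=
  inf'_le _ (mem_powerset.2 h)

theorem exists_matchRank_eq (S : Finset L) :
    ∃ T ⊆ S, matchRank E S = #(S \ T) + #(nbhd E T) := by
  obtain ⟨T, hT, h⟩ := exists_mem_eq_inf' (powerset_nonempty S)
    fun T => #(S \ T) + #(nbhd E T)
  exact ⟨T, mem_powerset.1 hT, h⟩

theorem matchRank_le_card (S : Finset L) : matchRank E S ≤ #S := by
  simpa [nbhd] using matchRank_le (E := E) (empty_subset S)

theorem matchRank_mono {S S' : Finset L} (h : S ⊆ S') : matchRank E S ≤ matchRank E S' := by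
  obtain ⟨T, -, hT⟩ := exists_matchRank_eq (E := E) S'
  calc matchRank E S ≤ #(S \ (T ∩ S)) + #(nbhd E (T ∩ S)) := matchRank_le inter_subset_right
    _ ≤ #(S' \ T) + #(nbhd E T) := by
        gcongr ?_ + #?_
        · exact card_le_card fun x hx => by
            simp only [mem_sdiff, mem_inter] at hx ⊢
            tauto
        · exact nbhd_mono E inter_subset_left
    _ = matchRank E S' := hT.symm

theorem matchRank_insert_le (S : Finset L) (v : L) :
    matchRank E (insert v S) ≤ matchRank E S + 1 := by
  obtain ⟨T, hTS, hT⟩ := exists_matchRank_eq (E := E) S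
  calc matchRank E (insert v S) ≤ #(insert v S \ T) + #(nbhd E T) :=
        matchRank_le (hTS.trans (subset_insert v S))
    _ ≤ #(S \ T) + 1 + #(nbhd E T) := by
        gcongr
        calc #(insert v S \ T) ≤ #(insert v (S \ T)) := card_le_card (by
              intro x; simp only [mem_sdiff, mem_insert]; tauto)
          _ ≤ #(S \ T) + 1 := card_insert_le _ _
    _ = matchRank E S + 1 := by omega

theorem matchRank_union_add_inter_le (X Y : Finset L) :
    matchRank E (X ∪ Y) + matchRank E (X ∩ Y) ≤ matchRank E X + matchRank E Y := by
  obtain ⟨A, hA, hXA⟩ := exists_matchRank_eq (E := E) X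
  obtain ⟨B, hB, hYB⟩ := exists_matchRank_eq (E := E) Y
  have hunion := matchRank_le (E := E) (union_subset_union hA hB)
  have hinter := matchRank_le (E := E) (inter_subset_inter hA hB)
  have hnbhd : #(nbhd E (A ∪ B)) + #(nbhd E (A ∩ B)) ≤ #(nbhd E A) + #(nbhd E B) := by
    rw [nbhd_union, ← card_union_add_card_inter (nbhd E A)]
    gcongr
    exact subset_inter (nbhd_mono E inter_subset_left) (nbhd_mono E inter_subset_right)
  have := card_sdiff_add_card_eq_card (union_subset_union hA hB)
  have := card_sdiff_add_card_eq_card (inter_subset_inter hA hB)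
  have := card_sdiff_add_card_eq_card hA
  have := card_sdiff_add_card_eq_card hB
  have := card_union_add_card_inter X Y
  have := card_union_add_card_inter A B
  omega

theorem exists_isMatching_image_fst_eq {A : Finset L} (hA : matchRank E A = #A) :
    ∃ M, IsMatching E M ∧ M.image Prod.fst = A := by
  have hall : ∀ T ⊆ A, #T ≤ #(nbhd E T) := fun T hT => by
    have := matchRank_le (E := E) hT
    have := card_sdiff_add_card_eq_card hT
    omega
  set t : A → Finset R := fun v => nbhd E {v.1}
  have hcard : ∀ s : Finset A, #s ≤ #(s.biUnion t) := fun s => by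
    have : s.biUnion t = nbhd E (s.map (Function.Embedding.subtype _)) := by
      ext r; simp [t, nbhd, and_comm]
    rw [this, ← card_map (Function.Embedding.subtype _)]
    exact hall _ fun v hv => by obtain ⟨w, -, rfl⟩ := mem_map.1 hv; exact w.2
  obtain ⟨f, hf, hft⟩ := (all_card_le_biUnion_card_iff_exists_injective t).1 hcard
  refine ⟨univ.image fun v : A => (v.1, f v), ⟨fun e he => ?_, ?_⟩, by ext; simp⟩
  · obtain ⟨v, -, rfl⟩ := mem_image.1 he
    simpa [t, nbhd] using hft v
  · simp only [mem_image, mem_univ, true_and]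
    rintro _ ⟨v, rfl⟩ _ ⟨v', rfl⟩ hne
    have hvv : v ≠ v' := by rintro rfl; exact hne rfl
    exact ⟨Subtype.coe_injective.ne hvv, hf.ne hvv⟩

theorem sum_le_matchRank {a : L → ℝ} (ha : ∀ v, a v ≤ 1)
    (hHall : ∀ S : Finset L, ∑ v ∈ S, a v ≤ #(nbhd E S)) (S : Finset L) :
    ∑ v ∈ S, a v ≤ matchRank E S := by
  obtain ⟨T, hTS, hT⟩ := exists_matchRank_eq (E := E) S
  have hST : ∑ v ∈ S \ T, a v ≤ #(S \ T) := by
    simpa using sum_le_sum fun v (_ : v ∈ S \ T) => ha v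
  rw [← sum_sdiff hTS, hT]
  push_cast
  linarith [hHall T]

end Rank

section Greedy
variable [DecidableEq L] [DecidableEq R] {E : Finset (L × R)}

theorem exists_basis_sum_weight_ge (w a : L → ℝ)
    (ha : ∀ S : Finset L, ∑ v ∈ S, a v ≤ matchRank E S) (U : Finset L) :
    ∃ A ⊆ U, matchRank E A = #A ∧ #A = matchRank E U ∧
      ∀ m, (∀ u ∈ U, m ≤ w u) →
        m * (matchRank E U - ∑ u ∈ U, a u) ≤ ∑ u ∈ A, w u - ∑ u ∈ U, w u * a u := by
  induction U using Finset.induction_on_min_value w with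
  | empty =>
    have : matchRank E (∅ : Finset L) = 0 := Nat.le_zero.1 (matchRank_le_card ∅)
    exact ⟨∅, subset_rfl, by simp [this], by simp [this], by simp [this]⟩
  | insert v U hvU hmin ih =>
    obtain ⟨A, hAU, hAind, hAcard, hAw⟩ := ih
    have hvA : v ∉ A := fun h => hvU (hAU h)
    have hkey := hAw (w v) hmin
    suffices ∃ B ⊆ insert v U, matchRank E B = #B ∧ #B = matchRank E (insert v U) ∧
        w v * (matchRank E (insert v U) - ∑ u ∈ insert v U, a u) ≤
          ∑ u ∈ B, w u - ∑ u ∈ insert v U, w u * a u by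
      obtain ⟨B, hBU, hBind, hBcard, hBw⟩ := this
      refine ⟨B, hBU, hBind, hBcard, fun m hm => le_trans ?_ hBw⟩
      exact mul_le_mul_of_nonneg_right (hm v (mem_insert_self v U)) (sub_nonneg.2 (ha _))
    have hmono := matchRank_mono (E := E) (subset_insert v U)
    have hins := matchRank_insert_le (E := E) U v
    rw [sum_insert hvU, sum_insert hvU]
    obtain h | h : matchRank E (insert v U) = matchRank E U ∨
        matchRank E (insert v U) = matchRank E U + 1 := by omega
    · refine ⟨A, hAU.trans (subset_insert v U), hAind, hAcard.trans h.symm, ?_⟩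
      rw [h]
      linarith
    · -- `insert v A` stays independent by submodularity for `U` and `insert v A`.
      have hsub := matchRank_union_add_inter_le (E := E) U (insert v A)
      rw [union_insert, union_eq_left.2 hAU, inter_insert_of_notMem hvU,
        inter_eq_right.2 hAU] at hsub
      have hle := matchRank_le_card (E := E) (insert v A)
      rw [card_insert_of_notMem hvA] at hle
      refine ⟨insert v A, insert_subset_insert v hAU, ?_, ?_, ?_⟩
      · rw [card_insert_of_notMem hvA]; omega
      · rw [card_insert_of_notMem hvA]; omega
      rw [sum_insert hvA, h]
      push_cast
      linarith

theorem exists_isMatching_sum_mul_le [Fintype L] {a w : L → ℝ} (ha : ∀ v, a v ≤ 1)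
    (hHall : ∀ S : Finset L, ∑ v ∈ S, a v ≤ #(nbhd E S)) (hw : 0 ≤ w) :
    ∃ M, IsMatching E M ∧ ∑ v, w v * a v ≤ ∑ v ∈ M.image Prod.fst, w v := by
  obtain ⟨A, -, hA, -, hAw⟩ := exists_basis_sum_weight_ge w a (sum_le_matchRank ha hHall) univ
  obtain ⟨M, hM, rfl⟩ := exists_isMatching_image_fst_eq hA
  have := hAw 0 fun u _ => hw u
  exact ⟨M, hM, by linarith⟩

theorem exists_isDistribM_sum_mul_le [Fintype L] [Fintype R] {a w : L → ℝ}
    (ha : ∀ v, a v ≤ 1) (hHall : ∀ S : Finset L, ∑ v ∈ S, a v ≤ #(nbhd E S)) (hw : 0 ≤ w) :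
    ∃ D, IsDistribM E D ∧ ∑ v, w v * a v ≤ ∑ v, w v * covP D v := by
  obtain ⟨M, hM, hle⟩ := exists_isMatching_sum_mul_le ha hHall hw
  refine ⟨Pi.single M 1, isDistribM_single hM, ?_⟩
  simpa only [covP_single, mul_ite, mul_one, mul_zero, sum_ite_mem, univ_inter] using hle

end Greedy

/-- Generalized Hall theorem: for reals `α_v ∈ [0,1]`, there is a distribution `D` of
matchings of `G` with coverage probability `D[v] ≥ α_v` for every left vertex `v` if and
only if `|Γ(S)| ≥ ∑_{v ∈ S} α_v` for every `S ⊆ L`. -/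
theorem exists_distrib_cov_ge_iff [Fintype L] [Fintype R] [DecidableEq L] [DecidableEq R]
    (E : Finset (L × R)) (a : L → ℝ) (ha : ∀ v, a v ∈ Set.Icc (0 : ℝ) 1) :
    (∃ D, IsDistribM E D ∧ ∀ v : L, a v ≤ covP D v) ↔
      ∀ S : Finset L, (∑ v ∈ S, a v) ≤ ((nbhd E S).card : ℝ) := by
  constructor
  · rintro ⟨D, hD, hcov⟩ S
    exact (sum_le_sum fun v _ => hcov v).trans (sum_covP_le_card_nbhd hD S)
  · intro hHall
    obtain ⟨_, ⟨D, hD, rfl⟩, haD⟩ := exists_mem_ge_of_forall_weighted_le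
      ((convex_setOf_isDistribM E).linear_image (covPLinearMap L R))
      ((isCompact_setOf_isDistribM E).image (covPLinearMap L R).continuous_of_finiteDimensional)
      a fun w hw => by
        obtain ⟨D, hD, hle⟩ := exists_isDistribM_sum_mul_le (fun v => (ha v).2) hHall hw
        exact ⟨_, ⟨D, hD, rfl⟩, hle⟩
    exact ⟨D, hD, haD⟩
end

section
/- Let G be a finite bipartite graph with bipartition (L, R), L nonempty. Let {y_w}_{w∈L∪R} be an optimal solution to the linear program, i.e., a feasible solution minimizing Σ_{v∈R} y_v among all feasible solutions. Then the set S = { v ∈ L : y_v > 0 } is nonempty and satisfies |Γ(S)| = (Σ_{v∈R} y_v) · |S|. -/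
/-!
A finite bipartite graph with bipartition `(L, R)` is modelled by its edge set
`E : Finset (L × R)`.  A feasible solution to the linear program of the paper assigns
nonnegative reals `yL u` (`u ∈ L`) and `yR v` (`v ∈ R`) with `∑_{u ∈ L} yL u = 1` and
`yL u ≤ yR v` for every edge `(u, v) ∈ E`; its objective value is `∑_{v ∈ R} yR v`.
An optimal solution is a feasible solution of minimum objective value.
-/

variable {L R : Type*}

/-- `(yL, yR)` is a feasible solution to the linear program. -/
def LPFeasible [Fintype L] (E : Finset (L × R)) (yL : L → ℝ) (yR : R → ℝ) : Prop :=
  (∀ u, 0 ≤ yL u) ∧ (∀ v, 0 ≤ yR v) ∧ (∑ u : L, yL u) = 1 ∧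
    ∀ e ∈ E, yL e.1 ≤ yR e.2

/-- If `(yL, yR)` is an optimal solution to the linear program, then the set
`S = { v ∈ L : yL v > 0 }` is nonempty and satisfies
`|Γ(S)| = (∑_{v ∈ R} yR v) · |S|`. -/
theorem lp_optimal_support [Fintype L] [Fintype R] [DecidableEq L] [DecidableEq R]
    [Nonempty L] (E : Finset (L × R)) (yL : L → ℝ) (yR : R → ℝ)
    (hfeas : LPFeasible E yL yR)
    (hopt : ∀ (yL' : L → ℝ) (yR' : R → ℝ), LPFeasible E yL' yR' →
      (∑ v : R, yR v) ≤ ∑ v : R, yR' v) :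
    (Finset.univ.filter fun v : L => 0 < yL v).Nonempty ∧
      ((nbhd E (Finset.univ.filter fun v : L => 0 < yL v)).card : ℝ) =
        (∑ v : R, yR v) * ((Finset.univ.filter fun v : L => 0 < yL v).card : ℝ) := by
  obtain ⟨hL0, hR0, hsum, hedge⟩ := hfeas
  set S := Finset.univ.filter fun v : L => 0 < yL v with hS
  have hmemS : ∀ u : L, u ∈ S ↔ 0 < yL u := by intro u; simp [hS]
  have hSne : S.Nonempty := by
    by_contra h
    rw [Finset.not_nonempty_iff_eq_empty] at h
    have hz : ∀ u : L, yL u = 0 := by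
      intro u
      by_contra hu
      have h1 : 0 < yL u := lt_of_le_of_ne (hL0 u) (Ne.symm hu)
      have h2 : u ∈ S := (hmemS u).mpr h1
      simp [h] at h2
    simp [hz] at hsum
  refine ⟨hSne, ?_⟩
  set T := nbhd E S with hTdef
  have hk : (0:ℝ) < S.card := by exact_mod_cast Finset.card_pos.mpr hSne
  have hT : ∀ u v, u ∈ S → (u, v) ∈ E → v ∈ T := by
    intro u v hu he
    exact Finset.mem_image.mpr ⟨(u, v), Finset.mem_filter.mpr ⟨he, hu⟩, rfl⟩
  have hy0 : ∀ u : L, u ∉ S → yL u = 0 := by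
    intro u hu
    by_contra h
    exact hu ((hmemS u).mpr (lt_of_le_of_ne (hL0 u) (Ne.symm h)))
  have hyRnn : (0:ℝ) ≤ ∑ v : R, yR v := Finset.sum_nonneg fun v _ => hR0 v
  -- Upper bound: (∑ yR) * |S| ≤ |T|, via the uniform solution on S
  have hub : (∑ v : R, yR v) * (S.card : ℝ) ≤ (T.card : ℝ) := by
    have hfeas' : LPFeasible E (fun u => if u ∈ S then ((S.card : ℝ))⁻¹ else 0)
        (fun v => if v ∈ T then ((S.card : ℝ))⁻¹ else 0) := by
      refine ⟨?_, ?_, ?_, ?_⟩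
      · intro u; dsimp only; split_ifs <;> positivity
      · intro v; dsimp only; split_ifs <;> positivity
      · rw [Finset.sum_ite_mem, Finset.univ_inter, Finset.sum_const, nsmul_eq_mul]
        field_simp
      · intro e he
        by_cases h1 : e.1 ∈ S
        · have h2 : e.2 ∈ T := hT e.1 e.2 h1 (by simpa using he)
          simp [h1, h2]
        · simp only [h1, if_false]
          split_ifs <;> positivity
    have hle := hopt _ _ hfeas'
    rw [Finset.sum_ite_mem, Finset.univ_inter, Finset.sum_const, nsmul_eq_mul] at hle
    rw [← le_div_iff₀ hk]
    calc (∑ v : R, yR v) ≤ (T.card : ℝ) * ((S.card : ℝ))⁻¹ := hle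
      _ = (T.card : ℝ) / (S.card : ℝ) := by ring
  -- Lower bound
  set a := S.inf' hSne yL with ha_def
  have ha : 0 < a := by
    rw [ha_def, Finset.lt_inf'_iff]
    intro u hu
    exact (hmemS u).mp hu
  have haleb : ∀ u ∈ S, a ≤ yL u := fun u hu => Finset.inf'_le yL hu
  set z : L → ℝ := fun u => yL u - (if u ∈ S then a else 0) with hz_def
  have hznn : ∀ u, 0 ≤ z u := by
    intro u
    simp only [hz_def]
    split_ifs with h
    · linarith [haleb u h]
    · linarith [hL0 u]
  have hzsum : ∑ u : L, z u = 1 - a * (S.card : ℝ) := by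
    simp only [hz_def]
    rw [Finset.sum_sub_distrib, hsum, Finset.sum_ite_mem, Finset.univ_inter,
      Finset.sum_const, nsmul_eq_mul]
    ring
  set M : R → ℝ := fun v =>
    Finset.univ.sup' Finset.univ_nonempty (fun u => if (u, v) ∈ E then z u else 0) with hM_def
  have hMnn : ∀ v, 0 ≤ M v := by
    intro v
    obtain ⟨u0⟩ := (inferInstance : Nonempty L)
    refine le_trans ?_ (Finset.le_sup' (fun u => if (u, v) ∈ E then z u else 0)
      (Finset.mem_univ u0))
    split_ifs
    · exact hznn u0
    · exact le_refl 0
  have hMedge : ∀ u v, (u, v) ∈ E → z u ≤ M v := by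
    intro u v he
    have h := Finset.le_sup' (fun u => if (u, v) ∈ E then z u else 0) (Finset.mem_univ u)
    simp only [if_pos he] at h
    exact h
  -- key pointwise inequality
  have hkey : ∀ v : R, M v + (if v ∈ T then a else 0) ≤ yR v := by
    intro v
    obtain ⟨u0, -, hu0⟩ := Finset.exists_mem_eq_sup' (Finset.univ_nonempty (α := L))
      (fun u => if (u, v) ∈ E then z u else 0)
    have hMv : M v = if (u0, v) ∈ E then z u0 else 0 := hu0
    by_cases hvT : v ∈ T
    · obtain ⟨e, he, hev⟩ := Finset.mem_image.mp hvT
      obtain ⟨heE, heS⟩ := Finset.mem_filter.mp he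
      have hyR1 : yL e.1 ≤ yR v := by
        have := hedge e heE; rwa [hev] at this
      have ha1 : a ≤ yR v := le_trans (haleb e.1 heS) hyR1
      simp only [hvT, if_true]
      by_cases he0 : (u0, v) ∈ E
      · rw [hMv, if_pos he0]
        by_cases hu0S : u0 ∈ S
        · have : z u0 = yL u0 - a := by simp [hz_def, hu0S]
          have := hedge (u0, v) he0
          simp only at this
          linarith
        · have : z u0 = 0 := by simp [hz_def, hu0S, hy0 u0 hu0S]
          rw [this]
          linarith
      · rw [hMv, if_neg he0]
        linarith
    · simp only [hvT, if_false, add_zero]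
      by_cases he0 : (u0, v) ∈ E
      · rw [hMv, if_pos he0]
        have hu0S : u0 ∉ S := fun h => hvT (hT u0 v h he0)
        have : z u0 = 0 := by simp [hz_def, hu0S, hy0 u0 hu0S]
        rw [this]
        exact hR0 v
      · rw [hMv, if_neg he0]
        exact hR0 v
  have hsum_key : (∑ v : R, M v) + a * (T.card : ℝ) ≤ ∑ v : R, yR v := by
    have h1 : ∑ v : R, (M v + (if v ∈ T then a else 0)) ≤ ∑ v : R, yR v :=
      Finset.sum_le_sum fun v _ => hkey v
    rw [Finset.sum_add_distrib, Finset.sum_ite_mem, Finset.univ_inter,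
      Finset.sum_const, nsmul_eq_mul] at h1
    linarith
  -- ∑ M ≥ (1 - a |S|) ∑ yR
  have hMlb : (1 - a * (S.card : ℝ)) * (∑ v : R, yR v) ≤ ∑ v : R, M v := by
    set c := 1 - a * (S.card : ℝ) with hc_def
    by_cases hc : 0 < c
    · have hfeas' : LPFeasible E (fun u => z u / c) (fun v => M v / c) := by
        refine ⟨?_, ?_, ?_, ?_⟩
        · intro u; exact div_nonneg (hznn u) hc.le
        · intro v; exact div_nonneg (hMnn v) hc.le
        · rw [← Finset.sum_div, hzsum]
          exact div_self (ne_of_gt hc)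
        · intro e he
          dsimp only
          gcongr
          exact hMedge e.1 e.2 he
      have hle := hopt _ _ hfeas'
      rw [← Finset.sum_div, le_div_iff₀ hc] at hle
      linarith
    · push_neg at hc
      have h1 : c * (∑ v : R, yR v) ≤ 0 := mul_nonpos_of_nonpos_of_nonneg hc hyRnn
      have h2 : (0:ℝ) ≤ ∑ v : R, M v := Finset.sum_nonneg fun v _ => hMnn v
      linarith
  -- combine
  have hlb : (T.card : ℝ) ≤ (∑ v : R, yR v) * (S.card : ℝ) := by
    have h := hsum_key
    nlinarith [hMlb, ha]
  linarith
end

section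
/- Let G be a finite bipartite graph with bipartition (L, R) and edge set E, and let {x_{uv}}_{(u,v)∈E} be non-negative reals such that Σ_{v : (u,v)∈E} x_{uv} ≤ 1 for all u ∈ L and Σ_{u : (u,v)∈E} x_{uv} ≤ 1 for all v ∈ R. Then there exist matchings M_1, …, M_k of G with k ≤ |E| + 1 and non-negative reals p_1, …, p_k summing to 1 such that for every edge (u, v) ∈ E, Σ_{i : (u,v)∈M_i} p_i = x_{uv}; that is, there is a distribution over at most |E| + 1 matchings in which each edge (u, v) is used with probability exactly x_{uv}. -/
/-!
A finite bipartite graph with bipartition `(L, R)` is modelled by its edge set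
`E : Finset (L × R)`.  A matching is a subset of `E` in which no two distinct edges
share an endpoint.
-/

variable {L R : Type*}

/-- Birkhoff–von Neumann style decomposition: if the nonnegative weights `x e` on the
edges have all row sums (over edges leaving a fixed `u ∈ L`) and column sums (over edges
entering a fixed `v ∈ R`) at most `1`, then there is a distribution over at most
`|E| + 1` matchings in which each edge `e ∈ E` is used with probability exactly `x e`. -/
theorem exists_matching_decomposition [Fintype L] [Fintype R]
    [DecidableEq L] [DecidableEq R]
    (E : Finset (L × R)) (x : L × R → ℝ)
    (hx0 : ∀ e ∈ E, 0 ≤ x e)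
    (hrow : ∀ u : L, (∑ e ∈ E.filter fun e => e.1 = u, x e) ≤ 1)
    (hcol : ∀ v : R, (∑ e ∈ E.filter fun e => e.2 = v, x e) ≤ 1) :
    ∃ (k : ℕ) (M : Fin k → Finset (L × R)) (p : Fin k → ℝ),
      k ≤ E.card + 1 ∧ (∀ i, IsMatching E (M i)) ∧ (∀ i, 0 ≤ p i) ∧
      (∑ i : Fin k, p i) = 1 ∧
      ∀ e ∈ E, (∑ i : Fin k, if e ∈ M i then p i else 0) = x e := by
  classical
  -- row/column sum conversions
  have hrowconv : ∀ u : L, ∑ v : R, (if (u,v) ∈ E then x (u,v) else 0)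
      = ∑ e ∈ E.filter fun e => e.1 = u, x e := by
    intro u
    have h1 : ∑ e ∈ E, (if e.1 = u then x e else 0)
        = ∑ e : L × R, (if e ∈ E then (if e.1 = u then x e else 0) else 0) := by
      rw [Finset.sum_ite_mem, Finset.univ_inter]
    rw [Finset.sum_filter, h1, Fintype.sum_prod_type,
      Finset.sum_eq_single u (fun a _ ha => by simp [ha]) (by simp)]
    simp
  have hcolconv : ∀ v : R, ∑ u : L, (if (u,v) ∈ E then x (u,v) else 0)
      = ∑ e ∈ E.filter fun e => e.2 = v, x e := by
    intro v
    have h1 : ∑ e ∈ E, (if e.2 = v then x e else 0)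
        = ∑ e : L × R, (if e ∈ E then (if e.2 = v then x e else 0) else 0) := by
      rw [Finset.sum_ite_mem, Finset.univ_inter]
    rw [Finset.sum_filter, h1, Fintype.sum_prod_type_right,
      Finset.sum_eq_single v (fun b _ hb => by simp [hb]) (by simp)]
    simp
  -- the doubly stochastic matrix
  set A : Matrix (L ⊕ R) (L ⊕ R) ℝ := fun i j =>
    match i, j with
    | .inl u, .inr v => if (u,v) ∈ E then x (u,v) else 0
    | .inr v, .inl u => if (u,v) ∈ E then x (u,v) else 0
    | .inl u, .inl u' => if u = u' then 1 - ∑ e ∈ E.filter fun e => e.1 = u, x e else 0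
    | .inr v, .inr v' => if v = v' then 1 - ∑ e ∈ E.filter fun e => e.2 = v, x e else 0
    with hAdef
  have hA : A ∈ doublyStochastic ℝ (L ⊕ R) := by
    rw [mem_doublyStochastic_iff_sum]
    refine ⟨?_, ?_, ?_⟩
    · rintro (u | v) (u' | v') <;> dsimp [A]
      · split
        · linarith [hrow u]
        · exact le_rfl
      · split
        · exact hx0 _ ‹_›
        · exact le_rfl
      · split
        · exact hx0 _ ‹_›
        · exact le_rfl
      · split
        · linarith [hcol v]
        · exact le_rfl
    · rintro (u | v)
      · rw [Fintype.sum_sum_type]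
        dsimp [A]
        rw [Finset.sum_ite_eq Finset.univ u (fun _ => 1 - ∑ e ∈ E.filter fun e => e.1 = u, x e)]
        rw [hrowconv u]
        simp
      · rw [Fintype.sum_sum_type]
        dsimp [A]
        rw [hcolconv v]
        rw [Finset.sum_ite_eq Finset.univ v (fun _ => 1 - ∑ e ∈ E.filter fun e => e.2 = v, x e)]
        simp
    · rintro (u | v)
      · rw [Fintype.sum_sum_type]
        dsimp [A]
        rw [hrowconv u]
        simp
      · rw [Fintype.sum_sum_type]
        dsimp [A]
        rw [Finset.sum_ite_eq' Finset.univ v (fun v' => 1 - ∑ e ∈ E.filter fun e => e.2 = v', x e)]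
        rw [hcolconv v]
        simp
  obtain ⟨w, hw0, hw1, hwA⟩ := exists_eq_sum_perm_of_mem_doublyStochastic hA
  -- matchings from permutations
  set Mm : Equiv.Perm (L ⊕ R) → Finset (L × R) :=
    fun σ => E.filter fun e => σ (Sum.inl e.1) = Sum.inr e.2 with hMmdef
  have hMmmem : ∀ σ e, e ∈ Mm σ ↔ e ∈ E ∧ σ (Sum.inl e.1) = Sum.inr e.2 := by
    intro σ e; simp [hMmdef]
  have hMmmatch : ∀ σ, IsMatching E (Mm σ) := by
    intro σ
    refine ⟨Finset.filter_subset _ _, ?_⟩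
    intro e he f hf hef
    rw [hMmmem] at he hf
    constructor
    · intro h1
      apply hef
      have := he.2
      rw [h1, hf.2] at this
      exact Prod.ext h1 (Sum.inr.inj this).symm
    · intro h2
      apply hef
      have : σ (Sum.inl e.1) = σ (Sum.inl f.1) := by rw [he.2, hf.2, h2]
      have := σ.injective this
      exact Prod.ext (Sum.inl.inj this) h2
  -- each edge's probability
  have hedge : ∀ e ∈ E, ∑ σ : Equiv.Perm (L ⊕ R), (if e ∈ Mm σ then w σ else 0) = x e := by
    intro e he
    have hAe : A (Sum.inl e.1) (Sum.inr e.2) = x e := by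
      simp [hAdef, he]
    rw [← hAe, ← hwA, Matrix.sum_apply]
    simp only [Matrix.smul_apply, Equiv.Perm.permMatrix, PEquiv.toMatrix_apply,
      Equiv.toPEquiv_apply, Option.mem_some_iff, smul_eq_mul, mul_ite, mul_one, mul_zero]
    refine Finset.sum_congr rfl fun σ _ => ?_
    simp only [hMmmem, he, true_and]
  -- Carathéodory reduction in the space of functions on E
  set ind : Finset (L × R) → (↥E → ℝ) := fun M e => if (e : L × R) ∈ M then 1 else 0 with hinddef
  set y : ↥E → ℝ := fun e => x e with hydef
  have hysum : ∑ σ : Equiv.Perm (L ⊕ R), w σ • ind (Mm σ) = y := by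
    funext e
    rw [Finset.sum_apply]
    simp only [Pi.smul_apply, hinddef, smul_eq_mul, mul_ite, mul_one, mul_zero]
    exact hedge e e.2
  have hyhull : y ∈ convexHull ℝ {v : ↥E → ℝ | ∃ M, IsMatching E M ∧ ind M = v} :=
    mem_convexHull_of_exists_fintype w (fun σ => ind (Mm σ)) hw0 hw1
      (fun σ => ⟨Mm σ, hMmmatch σ, rfl⟩) hysum
  obtain ⟨ι, hι, z, q, hzS, hai, hq0, hq1, hqz⟩ := eq_pos_convex_span_of_mem_convexHull hyhull
  have hcard : Fintype.card ι ≤ E.card + 1 := by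
    have h1 := hai.card_le_finrank_succ
    have h2 : Module.finrank ℝ (vectorSpan ℝ (Set.range z)) ≤ Module.finrank ℝ (↥E → ℝ) :=
      Submodule.finrank_le _
    have h3 : Module.finrank ℝ (↥E → ℝ) = E.card := by
      rw [Module.finrank_pi, Fintype.card_coe]
    omega
  choose Mz hMz1 hMz2 using fun i : ι => hzS (Set.mem_range_self i)
  set eqv : Fin (Fintype.card ι) ≃ ι := (Fintype.equivFin ι).symm with heqv
  refine ⟨Fintype.card ι, fun i => Mz (eqv i), fun i => q (eqv i), hcard,
    fun i => hMz1 _, fun i => (hq0 _).le, ?_, ?_⟩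
  · rw [Equiv.sum_comp eqv q, hq1]
  · intro e he
    have key : ∀ j : ι, q j * z j ⟨e, he⟩ = (if e ∈ Mz j then q j else 0) := by
      intro j
      rw [← hMz2 j]
      simp only [hinddef, mul_ite, mul_one, mul_zero]
    calc ∑ i : Fin (Fintype.card ι), (if e ∈ Mz (eqv i) then q (eqv i) else 0)
        = ∑ i : Fin (Fintype.card ι), q (eqv i) * z (eqv i) ⟨e, he⟩ := by
          exact Finset.sum_congr rfl fun i _ => (key (eqv i)).symm
      _ = ∑ j : ι, q j * z j ⟨e, he⟩ := Equiv.sum_comp eqv (fun j => q j * z j ⟨e, he⟩)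
      _ = (∑ j : ι, q j • z j) ⟨e, he⟩ := by
          rw [Finset.sum_apply]
          exact Finset.sum_congr rfl fun j _ => rfl
      _ = y ⟨e, he⟩ := by rw [hqz]
      _ = x e := rfl
end

section
/- Let n ≥ 1, let π be a permutation of {1, …, n}, and let X be a nonempty subset of {1, …, n}. Then the minimum of Σ_{v∈X} z_v over all vectors z ∈ ℝ^n with z_i ≥ 0 for all i, Σ_{i=1}^n z_i = 1, and z_{π(1)} ≥ z_{π(2)} ≥ … ≥ z_{π(n)} equals min_{i∈{1,…,n}} |X ∩ {π(1), …, π(i)}| / i. -/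
open Finset

private lemma abel_helper (n : ℕ) (W B : ℕ → ℝ) (hWn : W n = 0) :
    ∑ k ∈ range n, B k * W k
      = ∑ i ∈ range n, (W i - W (i + 1)) * ∑ k ∈ range (i + 1), B k := by
  have key : ∀ k ∈ range n, B k * W k = ∑ i ∈ Ico k n, B k * (W i - W (i + 1)) := by
    intro k hk
    rw [← Finset.mul_sum]
    congr 1
    rw [Finset.sum_Ico_eq_sub _ (mem_range.mp hk).le, Finset.sum_range_sub' W,
      Finset.sum_range_sub' W, hWn]
    ring
  rw [Finset.sum_congr rfl key]
  have := Finset.sum_Ico_Ico_comm 0 n (fun k i => B k * (W i - W (i + 1)))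
  simp only [Nat.Ico_zero_eq_range] at this
  rw [this]
  refine Finset.sum_congr rfl fun i _ => ?_
  rw [Finset.mul_sum]
  refine Finset.sum_congr rfl fun k _ => ?_
  ring

/-- The minimum of `∑_{v ∈ X} z v` over all nonnegative vectors `z` summing to `1` whose
coordinates are sorted in non-increasing order along the permutation `π` equals
`min_{i} |X ∩ π([i])| / i` (with `i` ranging over `{1, …, n}`, i.e. over prefix lengths
`(i : Fin n) + 1`). -/
theorem min_simplex_sorted_sum (n : ℕ) (hn : 1 ≤ n) (π : Equiv.Perm (Fin n))
    (X : Finset (Fin n)) (hX : X.Nonempty) :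
    IsLeast
      {x : ℝ | ∃ z : Fin n → ℝ, (∀ i, 0 ≤ z i) ∧ (∑ i : Fin n, z i) = 1 ∧
        (∀ i j : Fin n, i ≤ j → z (π j) ≤ z (π i)) ∧ x = ∑ v ∈ X, z v}
      (sInf {x : ℝ | ∃ i : Fin n,
        x = ((X ∩ ((Finset.univ.filter fun j : Fin n => j ≤ i).image π)).card : ℝ) /
          (((i : ℕ) : ℝ) + 1)}) := by
  have hn0 : 0 < n := hn
  set g : Fin n → ℝ := fun i =>
    ((X ∩ ((Finset.univ.filter fun j : Fin n => j ≤ i).image π)).card : ℝ) /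
      (((i : ℕ) : ℝ) + 1) with hg
  have hSrange : {x : ℝ | ∃ i : Fin n,
      x = ((X ∩ ((Finset.univ.filter fun j : Fin n => j ≤ i).image π)).card : ℝ) /
        (((i : ℕ) : ℝ) + 1)} = Set.range g := by
    ext x; simp [hg, eq_comm]
  rw [hSrange]
  haveI : Nonempty (Fin n) := ⟨⟨0, hn0⟩⟩
  have hfin : (Set.range g).Finite := Set.finite_range g
  have hne : (Set.range g).Nonempty := Set.range_nonempty g
  have hbdd : BddBelow (Set.range g) := hfin.bddBelow
  set m : ℝ := sInf (Set.range g) with hm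
  -- the key card computation
  have hcard : ∀ i : Fin n,
      ((X ∩ ((Finset.univ.filter fun j : Fin n => j ≤ i).image π)).card : ℝ)
        = ∑ j : Fin n, (if j ≤ i ∧ π j ∈ X then (1 : ℝ) else 0) := by
    intro i
    have h1 : X ∩ ((Finset.univ.filter fun j : Fin n => j ≤ i).image π)
        = (Finset.univ.filter (fun j : Fin n => j ≤ i ∧ π j ∈ X)).image π := by
      ext v
      simp only [Finset.mem_inter, Finset.mem_image, Finset.mem_filter, Finset.mem_univ,
        true_and]
      constructor
      · rintro ⟨hv, j, hj, rfl⟩; exact ⟨j, ⟨hj, hv⟩, rfl⟩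
      · rintro ⟨j, ⟨hj, hv⟩, rfl⟩; exact ⟨hv, j, hj, rfl⟩
    rw [Finset.sum_boole, h1, Finset.card_image_of_injective _ π.injective]
  constructor
  · -- membership: construct the optimal z
    have hmem : m ∈ Set.range g := hne.csInf_mem hfin
    obtain ⟨i₀, hi₀⟩ := hmem
    have hposd : (0 : ℝ) < ((i₀ : ℕ) : ℝ) + 1 := by positivity
    refine ⟨fun v => if π.symm v ≤ i₀ then 1 / (((i₀ : ℕ) : ℝ) + 1) else 0, ?_, ?_, ?_, ?_⟩
    · intro v; dsimp only; split <;> positivity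
    · rw [← Equiv.sum_comp π]
      simp only [Equiv.symm_apply_apply]
      rw [← Finset.sum_filter, Finset.sum_const]
      have : Finset.univ.filter (fun j : Fin n => j ≤ i₀) = Finset.Iic i₀ := by
        ext j; simp
      rw [this, Fin.card_Iic, nsmul_eq_mul]
      push_cast
      field_simp
    · intro i j hij
      simp only [Equiv.symm_apply_apply]
      by_cases hj : j ≤ i₀
      · rw [if_pos hj, if_pos (hij.trans hj)]
      · rw [if_neg hj]; split <;> positivity
    · have : ∑ v ∈ X, (if π.symm v ≤ i₀ then 1 / (((i₀ : ℕ) : ℝ) + 1) else 0)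
          = (X.filter fun v => π.symm v ≤ i₀).card * (1 / (((i₀ : ℕ) : ℝ) + 1)) := by
        rw [← Finset.sum_filter, Finset.sum_const, nsmul_eq_mul]
      rw [this]
      have hfil : X.filter (fun v => π.symm v ≤ i₀)
          = X ∩ ((Finset.univ.filter fun j : Fin n => j ≤ i₀).image π) := by
        ext v
        simp only [Finset.mem_filter, Finset.mem_inter, Finset.mem_image, Finset.mem_filter,
          Finset.mem_univ, true_and]
        constructor
        · rintro ⟨hv, hle⟩; exact ⟨hv, π.symm v, hle, π.apply_symm_apply v⟩
        · rintro ⟨hv, j, hj, rfl⟩; simpa using ⟨hv, hj⟩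
      rw [hfil, ← hi₀]
      simp only [hg]
      ring
  · -- lower bound
    rintro x ⟨z, hz0, hz1, hmono, rfl⟩
    set p : ℕ → Fin n := fun k => π ⟨k % n, Nat.mod_lt k hn0⟩ with hp
    have hpv : ∀ (k : ℕ) (hk : k < n), p k = π ⟨k, hk⟩ := by
      intro k hk; simp only [hp]; congr 1; exact Fin.ext (Nat.mod_eq_of_lt hk)
    set W : ℕ → ℝ := fun k => if hk : k < n then z (π ⟨k, hk⟩) else 0 with hW
    set A : ℕ → ℝ := fun k => if hk : k < n then (if π ⟨k, hk⟩ ∈ X then (1 : ℝ) else 0) else 0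
      with hA
    have hWn : W n = 0 := by simp [hW]
    have hD : ∀ i : ℕ, 0 ≤ W i - W (i + 1) := by
      intro i
      rw [sub_nonneg, hW]
      by_cases h1 : i + 1 < n
      · have h0 : i < n := by omega
        simp only [dif_pos h1, dif_pos h0]
        exact hmono ⟨i, h0⟩ ⟨i + 1, h1⟩ (by simp [Fin.le_def])
      · simp only [dif_neg h1]
        split
        · exact hz0 _
        · exact le_rfl
    have hsumW : ∑ k ∈ range n, W k = 1 := by
      rw [← hz1, ← Equiv.sum_comp π z, ← Fin.sum_univ_eq_sum_range]
      refine Finset.sum_congr rfl fun j _ => ?_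
      simp [hW, j.isLt]
    have hXsum : ∑ v ∈ X, z v = ∑ k ∈ range n, A k * W k := by
      have h1 : ∑ v ∈ X, z v = ∑ j : Fin n, (if π j ∈ X then z (π j) else 0) := by
        rw [Equiv.sum_comp π (fun v => if v ∈ X then z v else 0), Finset.sum_ite_mem,
          Finset.univ_inter]
      rw [h1, ← Fin.sum_univ_eq_sum_range (fun k => A k * W k)]
      refine Finset.sum_congr rfl fun j _ => ?_
      simp only [hA, hW, j.isLt, dif_pos]
      split <;> simp
    have hC : ∀ i : Fin n, ∑ k ∈ range ((i : ℕ) + 1), A k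
        = ((X ∩ ((Finset.univ.filter fun j : Fin n => j ≤ i).image π)).card : ℝ) := by
      intro i
      rw [hcard i]
      have hr : range ((i : ℕ) + 1) = (range n).filter (· ≤ (i : ℕ)) := by
        ext k; simp only [mem_range, mem_filter]; omega
      rw [hr, Finset.sum_filter, ← Fin.sum_univ_eq_sum_range
        (fun k => if k ≤ (i : ℕ) then A k else 0)]
      refine Finset.sum_congr rfl fun j _ => ?_
      simp only [hA, j.isLt, dif_pos, Fin.le_def]
      by_cases h : (j : ℕ) ≤ (i : ℕ)
      · simp [h]
      · simp [h]
    have hmle : ∀ i ∈ range n, m * ((i : ℝ) + 1) ≤ ∑ k ∈ range (i + 1), A k := by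
      intro i hi
      have hi' : i < n := mem_range.mp hi
      have : m ≤ g ⟨i, hi'⟩ := csInf_le hbdd ⟨⟨i, hi'⟩, rfl⟩
      rw [hg] at this
      have hpos : (0 : ℝ) < (i : ℝ) + 1 := by positivity
      have := (le_div_iff₀ hpos).mp this
      calc m * ((i : ℝ) + 1) ≤ _ := this
        _ = ∑ k ∈ range (i + 1), A k := (hC ⟨i, hi'⟩).symm
    calc m = m * ∑ k ∈ range n, W k := by rw [hsumW, mul_one]
      _ = m * ∑ k ∈ range n, (1 : ℝ) * W k := by simp
      _ = m * ∑ i ∈ range n, (W i - W (i + 1)) * ∑ k ∈ range (i + 1), (1 : ℝ) := by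
          rw [abel_helper n W (fun _ => 1) hWn]
      _ = ∑ i ∈ range n, (W i - W (i + 1)) * (m * ((i : ℝ) + 1)) := by
          rw [Finset.mul_sum]
          refine Finset.sum_congr rfl fun i _ => ?_
          rw [Finset.sum_const, Finset.card_range, nsmul_eq_mul]
          push_cast; ring
      _ ≤ ∑ i ∈ range n, (W i - W (i + 1)) * ∑ k ∈ range (i + 1), A k := by
          refine Finset.sum_le_sum fun i hi => ?_
          exact mul_le_mul_of_nonneg_left (hmle i hi) (hD i)
      _ = ∑ k ∈ range n, A k * W k := (abel_helper n W A hWn).symm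
      _ = ∑ v ∈ X, z v := hXsum.symm
end
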